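/- arXiv:1103.2295 — 2 statements merged into one kernel-verified Lean document; each statement's English description precedes it below -/
import Mathlib

section
/- For every positive integer n, V(2n) = n + V(n)/2 and V(2n+1) = n + 1 + V(n)/2. -/
open Finset

/-- The largest odd divisor of `k`. -/
def oddPart (k : ℕ) : ℕ := ordCompl[2] k

/-- `V n = ∑_{k=1}^n α(k)/k` as a rational number. -/
def V (n : ℕ) : ℚ := ∑ k ∈ Finset.Icc 1 n, (oddPart k : ℚ) / k

/-- `v n = V n - 2n/3`. -/
def v (n : ℕ) : ℚ := V n - 2 * n / 3

/-- `U n = ∑_{k=1}^n α(k)`. -/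
def U (n : ℕ) : ℕ := ∑ k ∈ Finset.Icc 1 n, oddPart k

/-- `G n = ∑_{k=1}^n (n+1-k)·α(k)/k` as a rational number. -/
def G (n : ℕ) : ℚ := ∑ k ∈ Finset.Icc 1 n, ((n : ℚ) + 1 - k) * (oddPart k : ℚ) / k

/-- `g n = n(n+2)/3 - G n`. -/
def g (n : ℕ) : ℚ := n * (n + 2) / 3 - G n

lemma oddPart_odd {k : ℕ} (h : Odd k) : oddPart k = k := by
  unfold oddPart
  rw [Nat.factorization_eq_zero_of_not_dvd (by rw [Nat.two_dvd_ne_zero]; exact Nat.odd_iff.mp h)]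
  simp

lemma oddPart_two_mul (m : ℕ) : oddPart (2 * m) = oddPart m := by
  rcases Nat.eq_zero_or_pos m with rfl | hm
  · simp [oddPart]
  · unfold oddPart
    rw [Nat.ordCompl_mul]
    norm_num

lemma V_succ (n : ℕ) : V (n + 1) = V n + (oddPart (n + 1) : ℚ) / (n + 1) := by
  unfold V
  rw [Finset.sum_Icc_succ_top (Nat.succ_le_succ (Nat.zero_le n))]
  push_cast
  ring_nf

lemma V_two_mul (n : ℕ) : V (2 * n) = n + V n / 2 := by
  induction n with
  | zero => simp [V]
  | succ n ih =>
    have h1 : (2 * (n + 1)) = (2 * n + 1) + 1 := by ring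
    have hodd : oddPart (2 * n + 1) = 2 * n + 1 := oddPart_odd ⟨n, by ring⟩
    have heven : oddPart (2 * (n + 1)) = oddPart (n + 1) := oddPart_two_mul (n + 1)
    have hne1 : ((2 * n + 1 : ℕ) : ℚ) ≠ 0 := by positivity
    have hne2 : ((n : ℚ) + 1) ≠ 0 := by positivity
    rw [h1, V_succ, show (2 * n + 1) = (2 * n) + 1 from rfl, V_succ, ih, V_succ,
      hodd, ← h1, heven]
    push_cast
    field_simp
    ring

theorem stmt0 (n : ℕ) (hn : 0 < n) :
    V (2 * n) = n + V n / 2 ∧ V (2 * n + 1) = n + 1 + V n / 2 := by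
  refine ⟨V_two_mul n, ?_⟩
  have hodd : oddPart (2 * n + 1) = 2 * n + 1 := oddPart_odd ⟨n, by ring⟩
  have hne1 : ((2 * n + 1 : ℕ) : ℚ) ≠ 0 := by positivity
  rw [V_succ, V_two_mul n, hodd]
  push_cast at hne1 ⊢
  field_simp
  ring
end

section
/- Let m ≥ 0 and n ∈ [2^m, 2^{m+1}) with binary digits ε_0,…,ε_m, and define h(n) = ∑_{k=0}^{m-1} (1-ε_k)·⌊n/2^{k+1}⌋. Then 0 ≤ h(n) ≤ n-1; h(n) = 0 iff n = 2^{m+1} - 1, and h(n) = n-1 iff n = 2^m. -/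
open Finset

private lemma geom2 (t : ℕ) : ∑ k ∈ Finset.range t, 2 ^ k = 2 ^ t - 1 := by
  induction t with
  | zero => simp
  | succ t ih =>
    have h : 1 ≤ 2 ^ t := Nat.one_le_two_pow
    rw [Finset.sum_range_succ, ih, pow_succ]
    omega

private lemma tele (D e : ℕ → ℕ) (M : ℕ) (h : ∀ j < M, D j = 2 * D (j + 1) + e j) :
    D 0 = D M + ∑ j ∈ Finset.range M, (D (j + 1) + e j) := by
  induction M with
  | zero => simp
  | succ M ih =>
    rw [Finset.sum_range_succ, ih (fun j hj => h j (by omega)), h M (by omega)]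
    ring

theorem stmt10 (m : ℕ) (ε : ℕ → ℕ) (hε : ∀ k, ε k ≤ 1) (n : ℕ)
    (hn : n = ∑ k ∈ Finset.range (m + 1), ε k * 2 ^ k)
    (h1 : 2 ^ m ≤ n) (h2 : n < 2 ^ (m + 1)) :
    (∑ k ∈ Finset.range m, (1 - ε k) * (n / 2 ^ (k + 1)) ≤ n - 1) ∧
      (∑ k ∈ Finset.range m, (1 - ε k) * (n / 2 ^ (k + 1)) = 0 ↔ n = 2 ^ (m + 1) - 1) ∧
      (∑ k ∈ Finset.range m, (1 - ε k) * (n / 2 ^ (k + 1)) = n - 1 ↔ n = 2 ^ m) := by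
  -- partial sums of digits are small
  have hlt : ∀ j : ℕ, (∑ k ∈ Finset.range j, ε k * 2 ^ k) < 2 ^ j := by
    intro j
    induction j with
    | zero => simp
    | succ j ih =>
      have h' : ε j * 2 ^ j ≤ 1 * 2 ^ j := Nat.mul_le_mul_right _ (hε j)
      rw [Finset.sum_range_succ, pow_succ]
      omega
  -- formula for n / 2^j
  have hdiv : ∀ j ≤ m, n / 2 ^ j = ∑ k ∈ Finset.range (m + 1 - j), ε (j + k) * 2 ^ k := by
    intro j hj
    obtain ⟨t, ht⟩ : ∃ t, m + 1 = j + t := ⟨m + 1 - j, by omega⟩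
    have ht2 : m + 1 - j = t := by omega
    rw [ht2, hn, ht, Finset.sum_range_add]
    have key : ∑ k ∈ Finset.range t, ε (j + k) * 2 ^ (j + k)
        = 2 ^ j * ∑ k ∈ Finset.range t, ε (j + k) * 2 ^ k := by
      rw [Finset.mul_sum]
      exact Finset.sum_congr rfl fun k _ => by rw [pow_add]; ring
    rw [key, Nat.add_mul_div_left _ _ (pow_pos two_pos j), Nat.div_eq_of_lt (hlt j), zero_add]
  -- ε m = 1 and n / 2^m = 1
  have hem : ε m = 1 ∧ n / 2 ^ m = 1 := by
    have h := hdiv m le_rfl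
    simp at h
    have l1 : 1 ≤ n / 2 ^ m := (Nat.one_le_div_iff (pow_pos two_pos m)).2 h1
    have l2 : n / 2 ^ m < 2 := Nat.div_lt_of_lt_mul (by rw [← pow_succ]; exact h2)
    omega
  -- ε j is the j-th binary digit of n
  have hmod : ∀ j ≤ m, ε j = n / 2 ^ j % 2 := by
    intro j hj
    have h := hdiv j hj
    have ht : m + 1 - j = (m - j) + 1 := by omega
    rw [ht, Finset.sum_range_succ'] at h
    have key : ∑ k ∈ Finset.range (m - j), ε (j + (k + 1)) * 2 ^ (k + 1)
        = 2 * ∑ k ∈ Finset.range (m - j), ε (j + (k + 1)) * 2 ^ k := by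
      rw [Finset.mul_sum]
      exact Finset.sum_congr rfl fun k _ => by rw [pow_succ]; ring
    rw [key] at h
    have := hε j
    simp at h
    omega
  -- recurrence
  have hrec : ∀ j < m, n / 2 ^ j = 2 * (n / 2 ^ (j + 1)) + ε j := by
    intro j hj
    have hdd : n / 2 ^ (j + 1) = (n / 2 ^ j) / 2 := by
      rw [Nat.div_div_eq_div_mul, pow_succ]
    rw [hmod j (le_of_lt hj), hdd]
    omega
  -- telescoping identity
  have hmain := tele (fun j => n / 2 ^ j) ε m hrec
  simp only [pow_zero, Nat.div_one, hem.2] at hmain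
  -- split the sum
  have hsplit : ∑ j ∈ Finset.range m, (n / 2 ^ (j + 1) + ε j)
      = (∑ j ∈ Finset.range m, (1 - ε j) * (n / 2 ^ (j + 1)))
        + ∑ j ∈ Finset.range m, (ε j * (n / 2 ^ (j + 1)) + ε j) := by
    rw [← Finset.sum_add_distrib]
    refine Finset.sum_congr rfl fun j _ => ?_
    rcases Nat.le_one_iff_eq_zero_or_eq_one.1 (hε j) with h | h <;> simp [h]
  rw [hsplit] at hmain
  set H := ∑ j ∈ Finset.range m, (1 - ε j) * (n / 2 ^ (j + 1)) with hH
  set R := ∑ j ∈ Finset.range m, (ε j * (n / 2 ^ (j + 1)) + ε j) with hR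
  -- hmain : n = 1 + (H + R)
  have hn1 : 1 ≤ n := le_trans Nat.one_le_two_pow h1
  refine ⟨by omega, ?_, ?_⟩
  · constructor
    · intro h0
      have hall : ∀ j < m, ε j = 1 := by
        intro j hj
        have hterm := (Finset.sum_eq_zero_iff.1 h0) j (Finset.mem_range.2 hj)
        have hpos : 1 ≤ n / 2 ^ (j + 1) := (Nat.one_le_div_iff (pow_pos two_pos _)).2
          (le_trans (pow_le_pow_right₀ one_le_two (by omega)) h1)
        have := hε j
        rcases Nat.mul_eq_zero.1 hterm with h' | h' <;> omega
      rw [hn, ← geom2 (m + 1)]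
      refine Finset.sum_congr rfl fun k hk => ?_
      have hk' : k < m ∨ k = m := by
        have := Finset.mem_range.1 hk; omega
      have : ε k = 1 := by
        rcases hk' with h' | h'
        · exact hall k h'
        · rw [h']; exact hem.1
      simp [this]
    · intro hn'
      apply Finset.sum_eq_zero
      intro j hj
      have hj' : j < m := Finset.mem_range.1 hj
      have hε1 : ε j = 1 := by
        have hm' := hmod j (le_of_lt hj')
        rw [hn'] at hm'
        have tb := Nat.testBit_two_pow_sub_one (m + 1) j
        rw [Nat.testBit_eq_decide_div_mod_eq, decide_eq_decide] at tb
        have := tb.2 (by omega)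
        omega
      simp [hε1]
  · have hRzero : R = 0 ↔ ∀ j < m, ε j = 0 := by
      rw [hR, Finset.sum_eq_zero_iff]
      constructor
      · intro h j hj
        have := h j (Finset.mem_range.2 hj)
        omega
      · intro h j hj
        have := h j (Finset.mem_range.1 hj)
        simp [this]
    constructor
    · intro hHn
      have hR0 : R = 0 := by omega
      have hall := hRzero.1 hR0
      rw [hn, Finset.sum_range_succ, Finset.sum_eq_zero (fun k hk => by
        simp [hall k (Finset.mem_range.1 hk)]), hem.1]
      simp
    · intro hn'
      have hall : ∀ j < m, ε j = 0 := by
        intro j hj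
        have hm' := hmod j (le_of_lt hj)
        rw [hn', Nat.pow_div (by omega) two_pos] at hm'
        have hmj : m - j = (m - j - 1) + 1 := by omega
        rw [hmj, pow_succ'] at hm'
        simp [Nat.mul_mod_right] at hm'
        exact hm'
      have hR0 : R = 0 := hRzero.2 hall
      omega
end
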